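/- Let F be a subgraph of a triangle-free graph with r edges. The optimal 1-means cost of the associated point set (one point x_e = x_i + x_j ∈ {0,1}^n per edge e = (i,j)) equals ∑_v d_F(v)·(1 − d_F(v)/r), where the optimal 1-means cost is ∑_e ‖x_e − μ‖² with μ the centroid of the points. -/

import Mathlib

/-- The point `x_e = x_i + x_j ∈ {0,1}^V ⊆ ℝ^V` associated to an edge `e = (i,j)`. -/
noncomputable def edgePoint {V : Type*} [DecidableEq V] (e : Sym2 V) : EuclideanSpace ℝ V :=
  (WithLp.equiv 2 (V → ℝ)).symm (fun v => if v ∈ e then 1 else 0)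

/-!
The 1-means cost of points `x_e` with sum `S` is `∑ ‖x_e‖² - ‖S‖² / r`. For edge points
`‖x_e‖² = 2` and `S` is the degree vector, so the cost is `2r - ∑ d(v)² / r`, which is
`∑ d(v) (1 - d(v) / r)` by the handshake lemma.
-/

open Finset

theorem Finset.sum_norm_sub_centroid_sq {ι E : Type*} [NormedAddCommGroup E]
    [InnerProductSpace ℝ E] (s : Finset ι) (x : ι → E) :
    ∑ i ∈ s, ‖x i - (#s : ℝ)⁻¹ • ∑ j ∈ s, x j‖ ^ 2 =
      ∑ i ∈ s, ‖x i‖ ^ 2 - (#s : ℝ)⁻¹ * ‖∑ i ∈ s, x i‖ ^ 2 := by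
  rcases s.eq_empty_or_nonempty with rfl | hs
  · simp
  have hcard : (#s : ℝ) ≠ 0 := by exact_mod_cast hs.card_pos.ne'
  simp_rw [norm_sub_sq_real, sum_add_distrib, sum_sub_distrib, ← mul_sum, ← sum_inner,
    real_inner_smul_right, real_inner_self_eq_norm_sq, norm_smul, sum_const, nsmul_eq_mul,
    Real.norm_eq_abs, abs_inv, Nat.abs_cast]
  field_simp
  ring

theorem edgePoint_apply {V : Type*} [DecidableEq V] (e : Sym2 V) (v : V) :
    edgePoint e v = if v ∈ e then 1 else 0 := by
  simp [edgePoint]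

theorem norm_edgePoint_sq {V : Type*} [Fintype V] [DecidableEq V] {e : Sym2 V}
    (he : ¬ e.IsDiag) : ‖edgePoint e‖ ^ 2 = 2 := by
  induction e using Sym2.ind with
  | h a b =>
    have hab : a ≠ b := he
    have hpair : ({x | x ∈ s(a, b)} : Finset V) = {a, b} := by ext; simp
    simp only [EuclideanSpace.real_norm_sq_eq, edgePoint_apply, ite_pow, one_pow,
      zero_pow two_ne_zero, sum_boole]
    rw [hpair, card_pair hab, Nat.cast_ofNat]

namespace SimpleGraph

variable {V : Type*} [Fintype V] [DecidableEq V] (G : SimpleGraph V) [DecidableRel G.Adj]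

theorem sum_edgePoint_apply (v : V) :
    (∑ e ∈ G.edgeFinset, edgePoint e) v = G.degree v := by
  simp only [WithLp.ofLp_sum, Finset.sum_apply, edgePoint_apply, sum_boole,
    ← G.incidenceFinset_eq_filter, G.card_incidenceFinset_eq_degree]

theorem norm_sum_edgePoint_sq :
    ‖∑ e ∈ G.edgeFinset, edgePoint e‖ ^ 2 = ∑ v, (G.degree v : ℝ) ^ 2 := by
  simp_rw [EuclideanSpace.real_norm_sq_eq, sum_edgePoint_apply]

theorem sum_norm_edgePoint_sq :
    ∑ e ∈ G.edgeFinset, ‖edgePoint e‖ ^ 2 = 2 * #G.edgeFinset := by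
  rw [sum_congr rfl fun e he => norm_edgePoint_sq (G.not_isDiag_of_mem_edgeFinset he)]
  simp [mul_comm]

end SimpleGraph

theorem stmt17_general {V : Type*} [Fintype V] [DecidableEq V] (F : SimpleGraph V)
    [DecidableRel F.Adj] (r : ℕ) (hr : F.edgeFinset.card = r) :
    ∑ e ∈ F.edgeFinset,
        ‖edgePoint e - (r : ℝ)⁻¹ • ∑ f ∈ F.edgeFinset, edgePoint f‖ ^ 2 =
      ∑ v : V, (F.degree v : ℝ) * (1 - (F.degree v : ℝ) / (r : ℝ)) := by
  subst hr
  have handshake : ∑ v, (F.degree v : ℝ) = 2 * #F.edgeFinset := by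
    exact_mod_cast F.sum_degrees_eq_twice_card_edges
  rw [sum_norm_sub_centroid_sq, F.sum_norm_edgePoint_sq, F.norm_sum_edgePoint_sq]
  simp_rw [mul_sub, mul_one, sum_sub_distrib, handshake, mul_sum]
  congr 1
  exact sum_congr rfl fun v _ => by ring

theorem stmt17 {V : Type*} [Fintype V] [DecidableEq V] (F : SimpleGraph V)
    [DecidableRel F.Adj] (htf : F.CliqueFree 3) (r : ℕ) (hr : F.edgeFinset.card = r) :
    ∑ e ∈ F.edgeFinset,
        ‖edgePoint e - (r : ℝ)⁻¹ • ∑ f ∈ F.edgeFinset, edgePoint f‖ ^ 2 =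
      ∑ v : V, (F.degree v : ℝ) * (1 - (F.degree v : ℝ) / (r : ℝ)) :=
  stmt17_general F r hr
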